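/- arXiv:1201.0224 — 2 statements merged into one kernel-verified Lean document; each statement's English description precedes it below -/
import Mathlib

section
/- Let X₁,...,Xₙ be independent zero-mean real random variables with (1/n)·Σᵢ E[|Xᵢ|^r] ≤ C for some r ∈ [1,2] and C > 0. Then for any ℓ > 0, P( |Σᵢ Xᵢ|/n > ℓ·n^{-(1−1/r)} ) ≤ 2C/ℓ^r. -/
/-!
The function `|x| ^ r` with `1 ≤ r ≤ 2` has derivative `r φ(x)`, `φ(x) = sign x · |x| ^ (r - 1)`,
and `φ` is `(r - 1)`-Hölder with constant `2`; hence
`|x + y| ^ r ≤ |x| ^ r + r φ(x) y + 2 |y| ^ r`. Taking `x` the partial sum `Sₖ` and `y = Xₖ₊₁`, the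
middle term has mean zero by independence, so `E|Sₖ₊₁| ^ r ≤ E|Sₖ| ^ r + 2 E|Xₖ₊₁| ^ r`, which
telescopes to the von Bahr–Esseen bound `E|Sₙ| ^ r ≤ 2 Σ E|Xᵢ| ^ r ≤ 2Cn`. Markov's inequality for
`|Sₙ| ^ r` at level `ℓ ^ r n` finishes the proof.
-/

open MeasureTheory ProbabilityTheory Set

/-- Equal to `sign x * |x| ^ s`; this form is the one in which `hasDerivAt_abs_rpow` states the
derivative of `|x| ^ (s + 1)`. -/
noncomputable def signedRpow (s x : ℝ) : ℝ := |x| ^ (s - 1) * x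

lemma signedRpow_neg (s x : ℝ) : signedRpow s (-x) = -signedRpow s x := by
  simp [signedRpow]

lemma signedRpow_of_nonneg {s x : ℝ} (hs : 0 < s) (hx : 0 ≤ x) : signedRpow s x = x ^ s := by
  rcases hx.eq_or_lt with rfl | hx
  · simp [signedRpow, Real.zero_rpow hs.ne']
  · rw [signedRpow, abs_of_pos hx, Real.rpow_sub_one hx.ne', div_mul_cancel₀ _ hx.ne']

lemma signedRpow_of_nonpos {s x : ℝ} (hs : 0 < s) (hx : x ≤ 0) : signedRpow s x = -(-x) ^ s := by
  rw [← neg_neg x, signedRpow_neg, signedRpow_of_nonneg hs (neg_nonneg.2 hx), neg_neg]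

lemma abs_signedRpow_le (s x : ℝ) : |signedRpow s x| ≤ |x| ^ s := by
  rcases eq_or_ne x 0 with rfl | hx
  · simpa [signedRpow] using Real.rpow_nonneg le_rfl s
  · rw [signedRpow, abs_mul, abs_of_nonneg (by positivity), Real.rpow_sub_one (abs_ne_zero.2 hx),
      div_mul_cancel₀ _ (abs_ne_zero.2 hx)]

lemma measurable_signedRpow (s : ℝ) : Measurable (signedRpow s) := by
  unfold signedRpow; fun_prop

lemma hasDerivAt_abs_rpow_signedRpow {r : ℝ} (hr : 1 < r) (x : ℝ) :
    HasDerivAt (fun u : ℝ => |u| ^ r) (r * signedRpow (r - 1) x) x := by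
  convert hasDerivAt_abs_rpow x hr using 1
  rw [signedRpow]; ring_nf

lemma signedRpow_add_sub_le {s : ℝ} (hs0 : 0 < s) (hs1 : s ≤ 1) (x : ℝ) {t : ℝ} (ht : 0 ≤ t) :
    signedRpow s (x + t) - signedRpow s x ≤ 2 * t ^ s := by
  have hts := Real.rpow_nonneg ht s
  rcases le_total 0 x with hx | hx
  · rw [signedRpow_of_nonneg hs0 (by linarith), signedRpow_of_nonneg hs0 hx]
    linarith [Real.rpow_add_le_add_rpow hx ht hs0.le hs1]
  rcases le_total (x + t) 0 with hxt | hxt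
  · rw [signedRpow_of_nonpos hs0 hxt, signedRpow_of_nonpos hs0 hx]
    have h := Real.rpow_add_le_add_rpow (neg_nonneg.2 hxt) ht hs0.le hs1
    rw [show -(x + t) + t = -x by ring] at h
    linarith
  · rw [signedRpow_of_nonneg hs0 hxt, signedRpow_of_nonpos hs0 hx]
    linarith [Real.rpow_le_rpow hxt (by linarith : x + t ≤ t) hs0.le,
      Real.rpow_le_rpow (neg_nonneg.2 hx) (by linarith : -x ≤ t) hs0.le]

lemma abs_add_rpow_le_of_nonneg {r : ℝ} (hr1 : 1 < r) (hr2 : r ≤ 2) (x : ℝ) {y : ℝ} (hy : 0 ≤ y) :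
    |x + y| ^ r ≤ |x| ^ r + r * signedRpow (r - 1) x * y + 2 * |y| ^ r := by
  set G : ℝ → ℝ := fun t => |x + t| ^ r - r * signedRpow (r - 1) x * t - 2 * |t| ^ r
  have hG : ∀ t, HasDerivAt G (r * signedRpow (r - 1) (x + t) - r * signedRpow (r - 1) x
      - 2 * (r * signedRpow (r - 1) t)) t := by
    intro t
    have h1 := (hasDerivAt_abs_rpow_signedRpow hr1 (x + t)).comp_const_add x t
    have h2 := (hasDerivAt_id' t).const_mul (r * signedRpow (r - 1) x)
    have h3 := (hasDerivAt_abs_rpow_signedRpow hr1 t).const_mul 2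
    exact ((h1.sub h2).sub h3).congr_deriv (by ring)
  have hanti : AntitoneOn G (Ici 0) := by
    refine antitoneOn_of_deriv_nonpos (convex_Ici 0)
      (fun t _ => (hG t).continuousAt.continuousWithinAt)
      (fun t _ => (hG t).differentiableAt.differentiableWithinAt) fun t ht => ?_
    rw [interior_Ici] at ht
    rw [(hG t).deriv, signedRpow_of_nonneg (by linarith) ht.le]
    have h := signedRpow_add_sub_le (s := r - 1) (by linarith) (by linarith) x ht.le
    nlinarith
  have h := hanti self_mem_Ici hy hy
  simp [G, Real.zero_rpow (by linarith : r ≠ 0)] at h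
  linarith

lemma abs_add_rpow_le {r : ℝ} (hr1 : 1 ≤ r) (hr2 : r ≤ 2) (x y : ℝ) :
    |x + y| ^ r ≤ |x| ^ r + r * signedRpow (r - 1) x * y + 2 * |y| ^ r := by
  rcases hr1.eq_or_lt with rfl | hr1
  · have h := abs_signedRpow_le 0 x
    have h' := neg_abs_le (signedRpow 0 x * y)
    rw [abs_mul] at h'
    simp only [Real.rpow_zero, Real.rpow_one, sub_self, one_mul] at h ⊢
    nlinarith [abs_add_le x y, abs_nonneg y]
  rcases le_total 0 y with hy | hy
  · exact abs_add_rpow_le_of_nonneg hr1 hr2 x hy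
  · have h := abs_add_rpow_le_of_nonneg hr1 hr2 (-x) (neg_nonneg.2 hy)
    rw [← neg_add, abs_neg, abs_neg, abs_neg, signedRpow_neg] at h
    convert h using 2
    ring

section Moments

variable {Ω : Type*} [MeasurableSpace Ω] {μ : Measure Ω} {r : ℝ}

/-- Integrates `abs_add_rpow_le` at `x = S`, `y = Y`: the cross term has mean zero by independence. -/
theorem ProbabilityTheory.IndepFun.integral_abs_add_rpow_le [IsFiniteMeasure μ] (hr1 : 1 ≤ r)
    (hr2 : r ≤ 2) {S Y : Ω → ℝ} (hS : Measurable S) (hY : Measurable Y) (hSY : IndepFun S Y μ)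
    (hSr : Integrable (fun ω => |S ω| ^ r) μ) (hYr : Integrable (fun ω => |Y ω| ^ r) μ)
    (hY0 : ∫ ω, Y ω ∂μ = 0) :
    Integrable (fun ω => |S ω + Y ω| ^ r) μ ∧
      ∫ ω, |S ω + Y ω| ^ r ∂μ ≤ ∫ ω, |S ω| ^ r ∂μ + 2 * ∫ ω, |Y ω| ^ r ∂μ := by
  have hφS : Integrable (fun ω => signedRpow (r - 1) (S ω)) μ := by
    have h := integrable_norm_rpow_of_le hS.aestronglyMeasurable (by linarith : 0 ≤ r - 1)
      (by linarith : 0 ≤ r) (by linarith) (by simpa only [Real.norm_eq_abs] using hSr)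
    refine h.mono' ((measurable_signedRpow _).comp hS).aestronglyMeasurable
      (ae_of_all _ fun ω => ?_)
    simpa [Real.norm_eq_abs] using abs_signedRpow_le (r - 1) (S ω)
  have hY1 : Integrable Y μ := by
    refine (integrable_norm_iff hY.aestronglyMeasurable).1 ?_
    simpa using integrable_norm_rpow_of_le hY.aestronglyMeasurable zero_le_one (by linarith) hr1
      (by simpa only [Real.norm_eq_abs] using hYr)
  have hφSY : IndepFun (fun ω => signedRpow (r - 1) (S ω)) Y μ :=
    hSY.comp (measurable_signedRpow _) measurable_id
  have hcross : Integrable (fun ω => signedRpow (r - 1) (S ω) * Y ω) μ :=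
    hφSY.integrable_mul hφS hY1
  have hcross0 : ∫ ω, signedRpow (r - 1) (S ω) * Y ω ∂μ = 0 := by
    rw [hφSY.integral_fun_mul_eq_mul_integral hφS.aestronglyMeasurable hY1.aestronglyMeasurable,
      hY0, mul_zero]
  have hR : Integrable
      (fun ω => |S ω| ^ r + r * (signedRpow (r - 1) (S ω) * Y ω) + 2 * |Y ω| ^ r) μ :=
    (hSr.add (hcross.const_mul r)).add (hYr.const_mul 2)
  have hle (ω : Ω) :
      |S ω + Y ω| ^ r ≤ |S ω| ^ r + r * (signedRpow (r - 1) (S ω) * Y ω) + 2 * |Y ω| ^ r := by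
    simpa only [mul_assoc] using abs_add_rpow_le hr1 hr2 (S ω) (Y ω)
  have hint : Integrable (fun ω => |S ω + Y ω| ^ r) μ :=
    hR.mono' ((hS.add hY).abs.pow_const r).aestronglyMeasurable (ae_of_all _ fun ω => by
      rw [Real.norm_eq_abs, abs_of_nonneg (by positivity)]; exact hle ω)
  refine ⟨hint, (integral_mono hint hR hle).trans_eq ?_⟩
  rw [integral_add ?_ (hYr.const_mul 2), integral_add hSr (hcross.const_mul r),
    integral_const_mul, integral_const_mul, hcross0, mul_zero, add_zero]
  exact hSr.add (hcross.const_mul r)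

theorem ProbabilityTheory.iIndepFun.integral_abs_sum_rpow_le [IsProbabilityMeasure μ]
    {ι : Type*} {X : ι → Ω → ℝ} (hr1 : 1 ≤ r) (hr2 : r ≤ 2) (hmeas : ∀ i, Measurable (X i))
    (hindep : iIndepFun X μ) (hint : ∀ i, Integrable (fun ω => |X i ω| ^ r) μ)
    (hmean : ∀ i, ∫ ω, X i ω ∂μ = 0) (s : Finset ι) :
    Integrable (fun ω => |∑ i ∈ s, X i ω| ^ r) μ ∧
      ∫ ω, |∑ i ∈ s, X i ω| ^ r ∂μ ≤ 2 * ∑ i ∈ s, ∫ ω, |X i ω| ^ r ∂μ := by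
  classical
  induction s using Finset.induction_on with
  | empty => simp [Real.zero_rpow (by linarith : r ≠ 0)]
  | insert a s ha ih =>
    have hS : Measurable fun ω => ∑ i ∈ s, X i ω := Finset.measurable_fun_sum s fun i _ => hmeas i
    have hSa : IndepFun (fun ω => ∑ i ∈ s, X i ω) (X a) μ := by
      simpa [Finset.sum_fn] using hindep.indepFun_finsetSum_of_notMem hmeas ha
    obtain ⟨hint', hle⟩ := hSa.integral_abs_add_rpow_le hr1 hr2 hS (hmeas a) ih.1 (hint a) (hmean a)
    simp_rw [Finset.sum_insert ha, add_comm (X a _)]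
    exact ⟨hint', by linarith [ih.2]⟩

lemma meas_ge_le_ofReal_integral_div [IsFiniteMeasure μ] {f : Ω → ℝ} (hf : 0 ≤ᵐ[μ] f)
    (hfi : Integrable f μ) {ε : ℝ} (hε : 0 < ε) :
    μ {ω | ε ≤ f ω} ≤ ENNReal.ofReal ((∫ ω, f ω ∂μ) / ε) := by
  rw [← ofReal_measureReal]
  exact ENNReal.ofReal_le_ofReal
    ((le_div_iff₀' hε).2 (mul_meas_ge_le_integral_of_nonneg hf hfi ε))

end Moments

lemma rpow_mul_le_rpow_of_lt_div {n ℓ r a : ℝ} (hn : 0 < n) (hℓ : 0 ≤ ℓ) (hr : 0 < r)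
    (h : ℓ * n ^ (-(1 - 1 / r)) < a / n) : ℓ ^ r * n ≤ a ^ r := by
  have hlt : ℓ * n ^ (1 / r) < a := by
    rwa [lt_div_iff₀ hn, mul_assoc, ← Real.rpow_add_one hn.ne',
      show -(1 - 1 / r) + 1 = 1 / r by ring] at h
  calc ℓ ^ r * n = (ℓ * n ^ (1 / r)) ^ r := by
        rw [Real.mul_rpow hℓ (by positivity), ← Real.rpow_mul hn.le, one_div_mul_cancel hr.ne',
          Real.rpow_one]
    _ ≤ a ^ r := Real.rpow_le_rpow (by positivity) hlt.le hr.le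

theorem stmt4_general {Ω : Type*} [MeasurableSpace Ω] (μ : Measure Ω) [IsProbabilityMeasure μ]
    (n : ℕ) (hn : 0 < n) (X : Fin n → Ω → ℝ) (r C ℓ : ℝ)
    (hr1 : 1 ≤ r) (hr2 : r ≤ 2) (hℓ : 0 < ℓ)
    (hmeas : ∀ i, Measurable (X i))
    (hindep : iIndepFun X μ)
    (hint : ∀ i, Integrable (fun ω => |X i ω| ^ r) μ)
    (hmean : ∀ i, ∫ ω, X i ω ∂μ = 0)
    (hmom : (1 / n : ℝ) * ∑ i, ∫ ω, |X i ω| ^ r ∂μ ≤ C) :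
    μ {ω | ℓ * (n : ℝ) ^ (-(1 - 1 / r)) < |∑ i, X i ω| / n} ≤
      ENNReal.ofReal (2 * C / ℓ ^ r) := by
  have hn0 : (0 : ℝ) < n := by exact_mod_cast hn
  obtain ⟨hSr, hvBE⟩ := hindep.integral_abs_sum_rpow_le hr1 hr2 hmeas hint hmean Finset.univ
  have hE : ∫ ω, |∑ i, X i ω| ^ r ∂μ ≤ 2 * C * n := by
    rw [one_div_mul_eq_div, div_le_iff₀ hn0] at hmom
    linarith
  calc μ {ω | ℓ * (n : ℝ) ^ (-(1 - 1 / r)) < |∑ i, X i ω| / n}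
      ≤ μ {ω | ℓ ^ r * n ≤ |∑ i, X i ω| ^ r} :=
        measure_mono fun ω => rpow_mul_le_rpow_of_lt_div hn0 hℓ.le (by linarith)
    _ ≤ ENNReal.ofReal ((∫ ω, |∑ i, X i ω| ^ r ∂μ) / (ℓ ^ r * n)) :=
        meas_ge_le_ofReal_integral_div (ae_of_all _ fun ω => by positivity) hSr (by positivity)
    _ ≤ ENNReal.ofReal (2 * C / ℓ ^ r) := by
        refine ENNReal.ofReal_le_ofReal ?_
        rw [div_le_iff₀ (by positivity)]
        calc _ ≤ 2 * C * n := hE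
          _ = 2 * C / ℓ ^ r * (ℓ ^ r * n) := by field_simp

/-- Von Bahr–Esseen law of large numbers: for independent zero-mean `Xᵢ` with
`(1/n)·Σ E|Xᵢ|^r ≤ C`, `r ∈ [1,2]`, `P(|Σ Xᵢ|/n > ℓ·n^{-(1-1/r)}) ≤ 2C/ℓ^r`. -/
theorem stmt4 {Ω : Type*} [MeasurableSpace Ω] (μ : Measure Ω) [IsProbabilityMeasure μ]
    (n : ℕ) (hn : 0 < n) (X : Fin n → Ω → ℝ) (r C ℓ : ℝ)
    (hr1 : 1 ≤ r) (hr2 : r ≤ 2) (hC : 0 < C) (hℓ : 0 < ℓ)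
    (hmeas : ∀ i, Measurable (X i))
    (hindep : iIndepFun X μ)
    (hint : ∀ i, Integrable (fun ω => |X i ω| ^ r) μ)
    (hmean : ∀ i, ∫ ω, X i ω ∂μ = 0)
    (hmom : (1 / n : ℝ) * ∑ i, ∫ ω, |X i ω| ^ r ∂μ ≤ C) :
    μ {ω | ℓ * (n : ℝ) ^ (-(1 - 1 / r)) < |∑ i, X i ω| / n} ≤
      ENNReal.ofReal (2 * C / ℓ ^ r) :=
  stmt4_general μ n hn X r C ℓ hr1 hr2 hℓ hmeas hindep hint hmean hmom
end

section
/- Let Σ be a symmetric positive semidefinite p×p matrix with λ_min(Σ) ≥ κ_ and λ_max(Σ) ≤ κ̄ where 0 < κ_ ≤ κ̄. Let h : Z → R satisfy h(z) = P(z)'θ + ρ(z) where P(z) ∈ R^p, θ ∈ R^p, E[P(z)P(z)'] = Σ, and let β* minimize E[(h(z) − P(z)'β)²] over β with ‖β‖₀ ≤ s, where s equals the cardinality of the index set S of the s largest |θ_j|. Then √(E[(h − P'β*)²]) ≤ √κ̄·‖θ[Sᶜ]‖₂ + √(E[ρ²]) and ‖θ[T*ᶜ]‖₂ ≤ √(κ̄/κ_)·‖θ[Sᶜ]‖₂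 + 2·√(E[ρ²]/κ_), where T* = support(β*). -/
/-!
Since `h - P'θ[S] = P'θ[Sᶜ] + ρ` and `θ[S]` is `s`-sparse, optimality of `β` and the triangle
inequality in `L²(μ)` bound the risk of `β` by `√κhi ‖θ[Sᶜ]‖ + ‖ρ‖`. Off the support `T*` of `β`,
`θ` agrees with `θ - β`, so `√κlo ‖θ[T*ᶜ]‖ ≤ √κlo ‖θ - β‖ ≤ ‖P'(θ - β)‖ = ‖(h - P'β) - ρ‖`, which
is at most that risk bound plus `‖ρ‖`.
-/

open MeasureTheory Finset

section L2Norm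

variable {Ω : Type*} [MeasurableSpace Ω] {μ : Measure Ω} {f g : Ω → ℝ}

lemma MeasureTheory.MemLp.sqrt_integral_sq_eq (hf : MemLp f 2 μ) :
    √(∫ ω, f ω ^ 2 ∂μ) = (eLpNorm f 2 μ).toReal := by
  rw [hf.eLpNorm_eq_integral_rpow_norm two_ne_zero ENNReal.ofNat_ne_top,
    ENNReal.toReal_ofReal (by positivity), Real.sqrt_eq_rpow]
  norm_num [Real.norm_eq_abs, sq_abs]

lemma MeasureTheory.MemLp.sqrt_integral_sq_add_le (hf : MemLp f 2 μ) (hg : MemLp g 2 μ) :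
    √(∫ ω, (f ω + g ω) ^ 2 ∂μ) ≤ √(∫ ω, f ω ^ 2 ∂μ) + √(∫ ω, g ω ^ 2 ∂μ) := by
  rw [hf.sqrt_integral_sq_eq, hg.sqrt_integral_sq_eq]
  calc √(∫ ω, (f ω + g ω) ^ 2 ∂μ) = (eLpNorm (f + g) 2 μ).toReal :=
        (hf.add hg).sqrt_integral_sq_eq
    _ ≤ (eLpNorm f 2 μ + eLpNorm g 2 μ).toReal :=
        ENNReal.toReal_mono (by finiteness [hf.eLpNorm_lt_top, hg.eLpNorm_lt_top])
          (eLpNorm_add_le hf.1 hg.1 one_le_two)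
    _ ≤ _ := ENNReal.toReal_add_le

lemma MeasureTheory.MemLp.sqrt_integral_sq_sub_le (hf : MemLp f 2 μ) (hg : MemLp g 2 μ) :
    √(∫ ω, (f ω - g ω) ^ 2 ∂μ) ≤ √(∫ ω, f ω ^ 2 ∂μ) + √(∫ ω, g ω ^ 2 ∂μ) := by
  simpa [sub_eq_add_neg] using hf.sqrt_integral_sq_add_le hg.neg

end L2Norm

lemma MeasureTheory.memLp_sum_mul {Ω ι : Type*} [MeasurableSpace Ω] [Fintype ι] {μ : Measure Ω}
    {q : ENNReal} {P : Ω → ι → ℝ} (hP : ∀ j, MemLp (fun ω => P ω j) q μ) (δ : ι → ℝ) :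
    MemLp (fun ω => ∑ j, P ω j * δ j) q μ :=
  memLp_finsetSum _ fun j _ => (hP j).mul_const (δ j)

section Restriction

variable {ι : Type*} [Fintype ι] [DecidableEq ι]

lemma Finset.sum_indicator_sq (A : Finset ι) (θ : ι → ℝ) :
    ∑ j, (↑A : Set ι).indicator θ j ^ 2 = ∑ j ∈ A, θ j ^ 2 := by
  simp [Set.indicator_apply, ite_pow]

lemma Finset.sum_mul_indicator_add_compl (S : Finset ι) (x θ : ι → ℝ) :
    ∑ j, x j * θ j =
      ∑ j, x j * (↑S : Set ι).indicator θ j + ∑ j, x j * (↑Sᶜ : Set ι).indicator θ j := by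
  rw [← sum_add_distrib]
  refine sum_congr rfl fun j _ => ?_
  rw [← mul_add, coe_compl, Set.indicator_self_add_compl_apply]

lemma Finset.card_filter_indicator_ne_zero_le (S : Finset ι) (θ : ι → ℝ) :
    #{j | (↑S : Set ι).indicator θ j ≠ 0} ≤ #S :=
  card_le_card fun j hj => by
    by_contra hjS
    simp [hjS] at hj

lemma Finset.sum_compl_support_sq_le (θ β : ι → ℝ) :
    ∑ j ∈ (univ.filter fun j => β j ≠ 0)ᶜ, θ j ^ 2 ≤ ∑ j, (θ j - β j) ^ 2 :=
  (sum_congr rfl fun j hj => by simp_all).trans_le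
    (sum_le_univ_sum_of_nonneg fun j => sq_nonneg (θ j - β j))

end Restriction

section SparseApproximation

variable {Ω ι : Type*} [MeasurableSpace Ω] [Fintype ι] [DecidableEq ι] {μ : Measure Ω}
  {P : Ω → ι → ℝ} {ρ h : Ω → ℝ} {θ : ι → ℝ} {κ : ℝ}

lemma sqrt_integral_sq_sub_restrict_le (hdef : ∀ ω, h ω = ∑ j, P ω j * θ j + ρ ω)
    (hρ : MemLp ρ 2 μ) (hP : ∀ j, MemLp (fun ω => P ω j) 2 μ)
    (hQhi : ∀ δ : ι → ℝ, ∫ ω, (∑ j, P ω j * δ j) ^ 2 ∂μ ≤ κ * ∑ j, δ j ^ 2) (S : Finset ι) :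
    √(∫ ω, (h ω - ∑ j, P ω j * (↑S : Set ι).indicator θ j) ^ 2 ∂μ) ≤
      √κ * √(∑ j ∈ Sᶜ, θ j ^ 2) + √(∫ ω, ρ ω ^ 2 ∂μ) := by
  set θc := (↑Sᶜ : Set ι).indicator θ
  have hresidual : ∀ ω, h ω - ∑ j, P ω j * (↑S : Set ι).indicator θ j =
      ∑ j, P ω j * θc j + ρ ω := fun ω => by
    rw [hdef, sum_mul_indicator_add_compl S]; ring
  simp_rw [hresidual]
  grw [(memLp_sum_mul hP θc).sqrt_integral_sq_add_le hρ, hQhi, sum_indicator_sq,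
    Real.sqrt_mul' _ (sum_nonneg fun j _ => sq_nonneg _)]

lemma sqrt_mul_sqrt_sum_compl_support_sq_le (hdef : ∀ ω, h ω = ∑ j, P ω j * θ j + ρ ω)
    (hρ : MemLp ρ 2 μ) (hP : ∀ j, MemLp (fun ω => P ω j) 2 μ)
    (hQlo : ∀ δ : ι → ℝ, κ * ∑ j, δ j ^ 2 ≤ ∫ ω, (∑ j, P ω j * δ j) ^ 2 ∂μ) (β : ι → ℝ) :
    √κ * √(∑ j ∈ (univ.filter fun j => β j ≠ 0)ᶜ, θ j ^ 2) ≤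
      √(∫ ω, (h ω - ∑ j, P ω j * β j) ^ 2 ∂μ) + √(∫ ω, ρ ω ^ 2 ∂μ) := by
  have hh : MemLp h 2 μ := by
    rw [funext hdef]; exact (memLp_sum_mul hP θ).add hρ
  have hsignal : ∀ ω, ∑ j, P ω j * (θ - β) j = (h ω - ∑ j, P ω j * β j) - ρ ω := fun ω => by
    simp only [hdef, Pi.sub_apply, mul_sub, sum_sub_distrib]; ring
  calc √κ * √(∑ j ∈ (univ.filter fun j => β j ≠ 0)ᶜ, θ j ^ 2)
      ≤ √(κ * ∑ j, (θ j - β j) ^ 2) := by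
        grw [Real.sqrt_mul' _ (sum_nonneg fun j _ => sq_nonneg _), sum_compl_support_sq_le θ β]
    _ ≤ √(∫ ω, (∑ j, P ω j * (θ - β) j) ^ 2 ∂μ) := Real.sqrt_le_sqrt (hQlo (θ - β))
    _ ≤ _ := by
      simp_rw [hsignal]
      exact (hh.sub (memLp_sum_mul hP β)).sqrt_integral_sq_sub_le hρ

end SparseApproximation

theorem stmt18_general {Ω : Type*} [MeasurableSpace Ω] (μ : Measure Ω)
    (p s : ℕ) (P : Ω → Fin p → ℝ) (ρ : Ω → ℝ) (θ : Fin p → ℝ) (h : Ω → ℝ)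
    (hdef : ∀ ω, h ω = (∑ j, P ω j * θ j) + ρ ω)
    (κlo κhi : ℝ) (hκlo : 0 < κlo)
    (hρ : MemLp ρ 2 μ) (hP2 : ∀ j, MemLp (fun ω => P ω j) 2 μ)
    (hQlo : ∀ δ : Fin p → ℝ, κlo * (∑ j, δ j ^ 2) ≤ ∫ ω, (∑ j, P ω j * δ j) ^ 2 ∂μ)
    (hQhi : ∀ δ : Fin p → ℝ, ∫ ω, (∑ j, P ω j * δ j) ^ 2 ∂μ ≤ κhi * (∑ j, δ j ^ 2))
    (S : Finset (Fin p)) (hScard : S.card = s)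
    (β : Fin p → ℝ)
    (hopt : ∀ b : Fin p → ℝ, (Finset.univ.filter fun j => b j ≠ 0).card ≤ s →
      ∫ ω, (h ω - ∑ j, P ω j * β j) ^ 2 ∂μ ≤ ∫ ω, (h ω - ∑ j, P ω j * b j) ^ 2 ∂μ) :
    Real.sqrt (∫ ω, (h ω - ∑ j, P ω j * β j) ^ 2 ∂μ) ≤
        Real.sqrt κhi * Real.sqrt (∑ j ∈ Sᶜ, θ j ^ 2) +
          Real.sqrt (∫ ω, (ρ ω) ^ 2 ∂μ) ∧
      Real.sqrt (∑ j ∈ (Finset.univ.filter fun j => β j ≠ 0)ᶜ, θ j ^ 2) ≤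
        Real.sqrt (κhi / κlo) * Real.sqrt (∑ j ∈ Sᶜ, θ j ^ 2) +
          2 * Real.sqrt ((∫ ω, (ρ ω) ^ 2 ∂μ) / κlo) := by
  have hcompetitor := hopt _ ((card_filter_indicator_ne_zero_le S θ).trans hScard.le)
  have hrisk := (Real.sqrt_le_sqrt hcompetitor).trans
    (sqrt_integral_sq_sub_restrict_le hdef hρ hP2 hQhi S)
  refine ⟨hrisk, ?_⟩
  have hsupport := sqrt_mul_sqrt_sum_compl_support_sq_le hdef hρ hP2 hQlo β
  rw [Real.sqrt_div' _ hκlo.le, Real.sqrt_div' _ hκlo.le]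
  calc √(∑ j ∈ (univ.filter fun j => β j ≠ 0)ᶜ, θ j ^ 2)
      ≤ (√κhi * √(∑ j ∈ Sᶜ, θ j ^ 2) + 2 * √(∫ ω, ρ ω ^ 2 ∂μ)) / √κlo := by
        rw [le_div_iff₀' (Real.sqrt_pos.2 hκlo)]
        linarith
    _ = _ := by ring

/-- Auxiliary bounds from the Uniform Approximation Lemma: if `h = P'θ + ρ` with Gram
matrix eigenvalues in `[κlo, κhi]`, `S` the index set of the `s` largest `|θ_j|`, and
`β` an `s`-sparse `L²`-best approximation coefficient with support `T*`, then
`√E[(h−P'β)²] ≤ √κhi·‖θ[Sᶜ]‖ + √E[ρ²]` and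
`‖θ[T*ᶜ]‖ ≤ √(κhi/κlo)·‖θ[Sᶜ]‖ + 2√(E[ρ²]/κlo)`. -/
theorem stmt18 {Ω : Type*} [MeasurableSpace Ω] (μ : Measure Ω) [IsProbabilityMeasure μ]
    (p s : ℕ) (P : Ω → Fin p → ℝ) (ρ : Ω → ℝ) (θ : Fin p → ℝ) (h : Ω → ℝ)
    (hdef : ∀ ω, h ω = (∑ j, P ω j * θ j) + ρ ω)
    (κlo κhi : ℝ) (hκlo : 0 < κlo) (hκ : κlo ≤ κhi)
    (hmeasP : Measurable P) (hρ : MemLp ρ 2 μ) (hP2 : ∀ j, MemLp (fun ω => P ω j) 2 μ)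
    (hQlo : ∀ δ : Fin p → ℝ, κlo * (∑ j, δ j ^ 2) ≤ ∫ ω, (∑ j, P ω j * δ j) ^ 2 ∂μ)
    (hQhi : ∀ δ : Fin p → ℝ, ∫ ω, (∑ j, P ω j * δ j) ^ 2 ∂μ ≤ κhi * (∑ j, δ j ^ 2))
    (S : Finset (Fin p)) (hScard : S.card = s)
    (hlargest : ∀ j ∈ S, ∀ k ∉ S, |θ k| ≤ |θ j|)
    (β : Fin p → ℝ) (hβs : (Finset.univ.filter fun j => β j ≠ 0).card ≤ s)
    (hopt : ∀ b : Fin p → ℝ, (Finset.univ.filter fun j => b j ≠ 0).card ≤ s →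
      ∫ ω, (h ω - ∑ j, P ω j * β j) ^ 2 ∂μ ≤ ∫ ω, (h ω - ∑ j, P ω j * b j) ^ 2 ∂μ) :
    Real.sqrt (∫ ω, (h ω - ∑ j, P ω j * β j) ^ 2 ∂μ) ≤
        Real.sqrt κhi * Real.sqrt (∑ j ∈ Sᶜ, θ j ^ 2) +
          Real.sqrt (∫ ω, (ρ ω) ^ 2 ∂μ) ∧
      Real.sqrt (∑ j ∈ (Finset.univ.filter fun j => β j ≠ 0)ᶜ, θ j ^ 2) ≤
        Real.sqrt (κhi / κlo) * Real.sqrt (∑ j ∈ Sᶜ, θ j ^ 2) +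
          2 * Real.sqrt ((∫ ω, (ρ ω) ^ 2 ∂μ) / κlo) :=
  stmt18_general μ p s P ρ θ h hdef κlo κhi hκlo hρ hP2 hQlo hQhi S hScard β hopt
end
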